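/- arXiv:2405.09727 — 2 statements merged into one kernel-verified Lean document; each statement's English description precedes it below -/
import Mathlib

section
/- Let G=(V,E) be the UGM hypergraph of a finite family 𝒞 of cliques. Suppose z lies in the flower relaxation MP^F(G) and satisfies every running intersection inequality whose edges satisfy ∪_{k∈T} e_k ∪ e_0 ⊆ C for some C ∈ 𝒞. Then z satisfies every running intersection inequality of G; equivalently, the running intersection relaxation MP^{RI}(G) (flower relaxation plus all running intersection inequalities) coincides with the polytope MP^{RI'}(G) obtained by adding to the flower relaxation only those running intersection inequalities with ∪_{k∈T} e_k ∪ e_0 ⊆ C for some C ∈ 𝒞. -/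
open Finset

/-- The edge set of the UGM hypergraph of a clique family `𝒞`. -/
def ugmEdges {V : Type} [DecidableEq V] (𝒞 : Finset (Finset V)) : Finset (Finset V) :=
  𝒞.biUnion fun C => C.powerset.filter fun e => 2 ≤ e.card

/-- The standard linearization. -/
def StdLin {V : Type} [Fintype V] [DecidableEq V] (E : Finset (Finset V))
    (z : Finset V → ℝ) : Prop :=
  (∀ v : V, z {v} ≤ 1) ∧
    ∀ e ∈ E, 0 ≤ z e ∧ (∑ v ∈ e, z {v}) - (e.card : ℝ) + 1 ≤ z e ∧ ∀ v ∈ e, z e ≤ z {v}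

/-- Flower condition for a center `e0` and a nonempty set `N` of neighbor edges. -/
def FlowerCond {V : Type} [DecidableEq V] (e0 : Finset V) (N : Finset (Finset V)) : Prop :=
  N.Nonempty ∧ ∀ f ∈ N, 2 ≤ ((e0 ∩ f) \ (N.erase f).biUnion (fun g => e0 ∩ g)).card

/-- The flower inequality centered at `e0` with neighbors `N`. -/
def FlowerIneq {V : Type} [DecidableEq V] (z : Finset V → ℝ) (e0 : Finset V)
    (N : Finset (Finset V)) : Prop :=
  (∑ v ∈ e0 \ N.biUnion id, z {v}) + (∑ f ∈ N, z f) - z e0 ≤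
    ((e0 \ N.biUnion id).card : ℝ) + (N.card : ℝ) - 1

/-- The set `N(e0 ∩ ek k) = (e0 ∩ ek k) ∩ (∪_{i < k} (e0 ∩ ek i))` induced by the ordering
`e0 ∩ ek 0, …, e0 ∩ ek (m-1)`. -/
def Nset {V : Type} [DecidableEq V] {m : ℕ} (e0 : Finset V) (ek : Fin m → Finset V)
    (k : Fin m) : Finset V :=
  (e0 ∩ ek k) ∩ (Finset.univ.filter fun i : Fin m => i < k).biUnion fun i => e0 ∩ ek i

/-- Conditions under which the running intersection inequality with center `e0`, ordered
neighbors `ek 0, …, ek (m-1)` and choices `w k ⊆ N(e0 ∩ ek k)` is defined: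
(i) `|e0 ∩ ek k| ≥ 2`; (ii) the sets `e0 ∩ ek k` are pairwise non-nested;
(iii) the given ordering is a running intersection ordering of `{e0 ∩ ek k : k}`;
and each `w k` is a subset of `N(e0 ∩ ek k)` that is empty, a singleton node, or an edge. -/
def RICond {V : Type} [DecidableEq V] {m : ℕ} (E : Finset (Finset V))
    (e0 : Finset V) (ek : Fin m → Finset V) (w : Fin m → Finset V) : Prop :=
  0 < m ∧
  (∀ k, 2 ≤ (e0 ∩ ek k).card) ∧
  (∀ k k' : Fin m, k ≠ k' → ¬ e0 ∩ ek k ⊆ e0 ∩ ek k') ∧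
  (∀ k : Fin m, (0 : ℕ) < (k : ℕ) → ∃ j : Fin m, j < k ∧ Nset e0 ek k ⊆ e0 ∩ ek j) ∧
  (∀ k, w k ⊆ Nset e0 ek k ∧ (w k = ∅ ∨ (w k).card = 1 ∨ w k ∈ E))

/-- The running intersection inequality, with the convention `z_∅ := 0`. -/
def RIIneq {V : Type} [DecidableEq V] {m : ℕ} (z : Finset V → ℝ)
    (e0 : Finset V) (ek : Fin m → Finset V) (w : Fin m → Finset V) : Prop :=
  -(∑ k : Fin m, if w k = ∅ then (0 : ℝ) else z (w k)) +
      (∑ v ∈ e0 \ Finset.univ.biUnion ek, z {v}) + (∑ k : Fin m, z (ek k)) - z e0 ≤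
    ((e0 \ Finset.univ.biUnion ek).card : ℝ) +
      ((Finset.univ.filter fun k : Fin m => Nset e0 ek k = ∅).card : ℝ) - 1

/-! Replacing every neighbour `e_k` by `e_0 ∩ e_k` leaves the sets `N(e_0 ∩ e_k)` and the nodes of
`e_0` left uncovered unchanged, so it changes only the terms `z_{e_k}`; and each `e_0 ∩ e_k` is an
edge, since it has at least two nodes and lies in the clique containing `e_0`. The flower
inequality centred at `e_0 ∩ e_k` with the single neighbour `e_k` reads `z_{e_k} ≤ z_{e_0 ∩ e_k}`,
so the inequality for the neighbours `e_k` follows from the one for the neighbours `e_0 ∩ e_k`,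
whose edges all lie in one clique. -/

theorem mem_ugmEdges {V : Type} [DecidableEq V] {𝒞 : Finset (Finset V)} {e : Finset V} :
    e ∈ ugmEdges 𝒞 ↔ ∃ C ∈ 𝒞, e ⊆ C ∧ 2 ≤ e.card := by
  simp only [ugmEdges, mem_biUnion, mem_filter, mem_powerset]

section SingleNeighbour

variable {V : Type} [DecidableEq V] {f e : Finset V}

theorem flowerCond_singleton (h : 2 ≤ (f ∩ e).card) : FlowerCond f {e} :=
  ⟨singleton_nonempty e, fun g hg => by simpa [mem_singleton.1 hg] using h⟩

theorem FlowerIneq.le_of_subset {z : Finset V → ℝ} (hfe : f ⊆ e) (h : FlowerIneq z f {e}) :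
    z e ≤ z f := by
  simpa [FlowerIneq, sdiff_eq_empty_iff_subset.2 hfe] using h

end SingleNeighbour

section RestrictNeighbours

variable {V : Type} [DecidableEq V] {m : ℕ} (e0 : Finset V) (ek : Fin m → Finset V)

theorem Nset_inter_left : Nset e0 (fun k => e0 ∩ ek k) = Nset e0 ek := by
  funext k
  simp only [Nset, ← inter_assoc, inter_self]

theorem sdiff_biUnion_inter_left (s : Finset (Fin m)) :
    e0 \ s.biUnion (fun k => e0 ∩ ek k) = e0 \ s.biUnion ek := by
  rw [← inter_biUnion, sdiff_inter_self_left]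

variable {e0 ek}

theorem RICond.inter_left {E : Finset (Finset V)} {w : Fin m → Finset V}
    (h : RICond E e0 ek w) : RICond E e0 (fun k => e0 ∩ ek k) w := by
  simpa only [RICond, Nset_inter_left, ← inter_assoc, inter_self] using h

theorem RIIneq.of_inter_left {z : Finset V → ℝ} {w : Fin m → Finset V}
    (h : RIIneq z e0 (fun k => e0 ∩ ek k) w) (hz : ∀ k, z (ek k) ≤ z (e0 ∩ ek k)) :
    RIIneq z e0 ek w := by
  simp only [RIIneq, Nset_inter_left, sdiff_biUnion_inter_left] at h ⊢
  linarith [sum_le_sum fun k (_ : k ∈ univ) => hz k]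

end RestrictNeighbours

/-- for a UGM hypergraph, the running intersection relaxation coincides with the
polytope obtained from the flower relaxation by adding only the running intersection
inequalities whose edges all lie in a single clique. -/
theorem running_intersection_relaxation_eq_restricted {V : Type} [Fintype V] [DecidableEq V]
    (𝒞 : Finset (Finset V)) :
    {z : Finset V → ℝ | (StdLin (ugmEdges 𝒞) z ∧
        ∀ e0 ∈ ugmEdges 𝒞, ∀ N ⊆ ugmEdges 𝒞, FlowerCond e0 N → FlowerIneq z e0 N) ∧
        ∀ (m : ℕ) (e0 : Finset V) (ek : Fin m → Finset V) (w : Fin m → Finset V),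
          e0 ∈ ugmEdges 𝒞 → (∀ k, ek k ∈ ugmEdges 𝒞) → RICond (ugmEdges 𝒞) e0 ek w →
            RIIneq z e0 ek w} =
      {z : Finset V → ℝ | (StdLin (ugmEdges 𝒞) z ∧
        ∀ e0 ∈ ugmEdges 𝒞, ∀ N ⊆ ugmEdges 𝒞, FlowerCond e0 N → FlowerIneq z e0 N) ∧
        ∀ (m : ℕ) (e0 : Finset V) (ek : Fin m → Finset V) (w : Fin m → Finset V),
          e0 ∈ ugmEdges 𝒞 → (∀ k, ek k ∈ ugmEdges 𝒞) → RICond (ugmEdges 𝒞) e0 ek w →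
            (∃ C ∈ 𝒞, Finset.univ.biUnion ek ∪ e0 ⊆ C) → RIIneq z e0 ek w} := by
  ext z
  refine ⟨fun ⟨hF, hRI⟩ => ⟨hF, fun m e0 ek w he0 hek hcond _ => hRI m e0 ek w he0 hek hcond⟩,
    fun ⟨⟨hstd, hflow⟩, hRI⟩ => ⟨⟨hstd, hflow⟩, fun m e0 ek w he0 hek hcond => ?_⟩⟩
  obtain ⟨C, hC, he0C, -⟩ := mem_ugmEdges.1 he0
  have hmem : ∀ k, e0 ∩ ek k ∈ ugmEdges 𝒞 := fun k =>
    mem_ugmEdges.2 ⟨C, hC, inter_subset_left.trans he0C, hcond.2.1 k⟩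
  have hinC : univ.biUnion (fun k => e0 ∩ ek k) ∪ e0 ⊆ C :=
    union_subset (biUnion_subset.2 fun k _ => inter_subset_left.trans he0C) he0C
  refine (hRI m e0 _ w he0 hmem hcond.inter_left ⟨C, hC, hinC⟩).of_inter_left fun k => ?_
  refine (hflow _ (hmem k) {ek k} (singleton_subset_iff.2 (hek k)) ?_).le_of_subset
    inter_subset_right
  exact flowerCond_singleton (by rw [inter_assoc, inter_self]; exact hcond.2.1 k)
end

section
/- Let C be a finite set, let G_C be the complete hypergraph with node set C, and let H_C := {z : ∑_{∅ ≠ p ⊆ C} (−2)^{|p|−1} z_p = 0}. Then the projection of MP(G_C) ∩ H_C onto the node coordinates (z_{{v}})_{v∈C} equals the parity polytope on C, i.e. the convex hull of {x ∈ {0,1}^C : ∑_{v∈C} x_v is even}. -/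
/-!
Expanding `∏ v, (1 - 2 x_v)` over the subsets of `C` and replacing each monomial `∏_{v ∈ p} x_v`
by `z_p` turns it into `1 - 2 ℓ(z)`, where `ℓ` is the linear form defining `H_C`. On a point of
the multilinear set with binary node part `x` the product is `(-1)^{|x|}`, so `ℓ` is `0` or `1`
there according to the parity of `|x|`. Hence `ℓ ≥ 0` on `MP(G_C)` and `H_C` cuts out the face
spanned by the even points; the projection is linear, so it commutes with taking convex hulls.
-/

open Finset

/-- The multilinear set of the complete hypergraph on node set `ι`: one coordinate `z p`
for every nonempty `p ⊆ ι`. -/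
def CompleteMultilinearSet (ι : Type) [DecidableEq ι] : Set (Finset ι → ℝ) :=
  {z | ∃ x : ι → ℝ, (∀ v, x v = 0 ∨ x v = 1) ∧
        ∀ p : Finset ι, p.Nonempty → z p = ∏ v ∈ p, x v}

/-- The linearized parity form `∑_{∅ ≠ p ⊆ C} (−2)^{|p|−1} z_p`. -/
def parityForm {ι : Type} [Fintype ι] [DecidableEq ι] (z : Finset ι → ℝ) : ℝ :=
  ∑ p ∈ Finset.univ.filter fun p : Finset ι => p.Nonempty, (-2 : ℝ) ^ (p.card - 1) * z p

theorem convexHull_inter_setOf_eq_zero_of_nonneg {𝕜 E : Type*} [Field 𝕜] [LinearOrder 𝕜]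
    [IsStrictOrderedRing 𝕜] [AddCommGroup E] [Module 𝕜 E] {s : Set E} (φ : E →ₗ[𝕜] 𝕜)
    (hφ : ∀ x ∈ s, 0 ≤ φ x) :
    convexHull 𝕜 s ∩ {x | φ x = 0} = convexHull 𝕜 (s ∩ {x | φ x = 0}) := by
  refine subset_antisymm ?_ (Set.subset_inter (convexHull_mono Set.inter_subset_left) ?_)
  · -- `A` is convex: `φ` vanishes at a proper convex combination of points where it is
    -- nonnegative only if it vanishes at both.
    let A := {x | 0 ≤ φ x ∧ (φ x = 0 → x ∈ convexHull 𝕜 (s ∩ {x | φ x = 0}))}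
    have hA : Convex 𝕜 A := by
      rintro x ⟨hx, hxA⟩ y ⟨hy, hyA⟩ a b ha hb hab
      simp only [A, Set.mem_ofPred_eq, map_add, map_smul, smul_eq_mul]
      refine ⟨by positivity, fun h ↦ ?_⟩
      rcases ha.eq_or_lt with rfl | ha'
      · simp_all
      rcases hb.eq_or_lt with rfl | hb'
      · simp_all
      have hx0 : φ x = 0 := by nlinarith [mul_nonneg hb hy]
      have hy0 : φ y = 0 := by nlinarith [mul_nonneg ha hx]
      exact convex_convexHull 𝕜 _ (hxA hx0) (hyA hy0) ha hb hab
    have hsA : s ⊆ A := fun y hy ↦ ⟨hφ y hy, fun h ↦ subset_convexHull 𝕜 _ ⟨hy, h⟩⟩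
    rintro x ⟨hxs, hx0⟩
    exact (convexHull_min hsA hA hxs).2 hx0
  · exact (convex_hyperplane φ.isLinear 0).convexHull_subset_iff.2 Set.inter_subset_right

theorem prod_one_sub_two_mul_of_binary {ι : Type*} [Fintype ι] {x : ι → ℝ}
    (hx : ∀ v, x v = 0 ∨ x v = 1) :
    ∏ v, (1 - 2 * x v) = (-1) ^ #{v | x v = 1} := by
  have hfactor : ∀ v, 1 - 2 * x v = if x v = 1 then -1 else 1 := fun v ↦ by
    rcases hx v with h | h <;> norm_num [h]
  rw [prod_congr rfl fun v _ ↦ hfactor v, ← prod_filter, prod_const]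

section

variable {ι : Type} [Fintype ι] [DecidableEq ι]

def parityFormₗ : (Finset ι → ℝ) →ₗ[ℝ] ℝ where
  toFun := parityForm
  map_add' z w := by simp only [parityForm, Pi.add_apply, mul_add, sum_add_distrib]
  map_smul' c z := by
    simp only [parityForm, Pi.smul_apply, smul_eq_mul, RingHom.id_apply, mul_sum]
    exact sum_congr rfl fun _ _ ↦ by ring

theorem coe_parityFormₗ : ⇑(parityFormₗ : (Finset ι → ℝ) →ₗ[ℝ] ℝ) = parityForm := rfl

theorem one_sub_two_mul_parityForm {x : ι → ℝ} {z : Finset ι → ℝ}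
    (hz : ∀ p : Finset ι, p.Nonempty → z p = ∏ v ∈ p, x v) :
    1 - 2 * parityForm z = ∏ v, (1 - 2 * x v) := by
  have hterm : ∀ p : Finset ι, ∏ v ∈ p, -2 * x v = (-2) ^ p.card * ∏ v ∈ p, x v := fun p ↦ by
    rw [prod_mul_distrib, prod_const]
  simp_rw [sub_eq_add_neg (1 : ℝ), ← neg_mul, prod_one_add, powerset_univ, hterm]
  rw [← add_sum_erase _ _ (mem_univ ∅), card_empty, pow_zero, prod_empty, mul_one, parityForm,
    mul_sum]
  congr 1
  refine sum_congr (by ext p; simp [nonempty_iff_ne_empty]) fun p hp ↦ ?_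
  have hp : p.Nonempty := nonempty_iff_ne_empty.2 (by simpa using hp)
  rw [hz p hp, ← mul_pow_sub_one hp.card_pos.ne']
  ring

theorem parityForm_of_binary {x : ι → ℝ} (hx : ∀ v, x v = 0 ∨ x v = 1) {z : Finset ι → ℝ}
    (hz : ∀ p : Finset ι, p.Nonempty → z p = ∏ v ∈ p, x v) :
    parityForm z = if Even #{v | x v = 1} then 0 else 1 := by
  have h := (one_sub_two_mul_parityForm hz).trans (prod_one_sub_two_mul_of_binary hx)
  split_ifs with heven
  · rw [heven.neg_one_pow] at h; linarith
  · rw [(Nat.not_even_iff_odd.1 heven).neg_one_pow] at h; linarith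

theorem parityForm_nonneg {z : Finset ι → ℝ} (hz : z ∈ CompleteMultilinearSet ι) :
    0 ≤ parityForm z := by
  obtain ⟨x, hx, hzx⟩ := hz
  rw [parityForm_of_binary hx hzx]
  split_ifs <;> norm_num

def nodeProj : (Finset ι → ℝ) →ₗ[ℝ] (ι → ℝ) := LinearMap.pi fun v ↦ LinearMap.proj {v}

theorem image_nodeProj_completeMultilinearSet_inter_parityForm_eq_zero :
    nodeProj '' (CompleteMultilinearSet ι ∩ {z | parityForm z = 0}) =
      {x : ι → ℝ | (∀ v, x v = 0 ∨ x v = 1) ∧ Even #{v | x v = 1}} := by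
  ext x
  constructor
  · rintro ⟨z, ⟨⟨y, hy, hzy⟩, hz0⟩, rfl⟩
    have hzy' : nodeProj z = y := funext fun v ↦ by
      simp [nodeProj, hzy {v} (singleton_nonempty v)]
    have heven : Even #{v | y v = 1} := by
      by_contra h
      simp [parityForm_of_binary hy hzy, h] at hz0
    exact hzy' ▸ ⟨hy, heven⟩
  · rintro ⟨hx, heven⟩
    refine ⟨fun p ↦ ∏ v ∈ p, x v, ⟨⟨x, hx, fun _ _ ↦ rfl⟩, ?_⟩, funext fun v ↦ prod_singleton _ _⟩
    simp [parityForm_of_binary hx (fun _ _ ↦ rfl), heven]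
end

/-- projecting `MP(G_C) ∩ H_C` onto the node coordinates yields exactly the
parity polytope, the convex hull of the binary vectors with an even number of ones. -/
theorem projection_of_parity_constrained_multilinear_polytope
    (ι : Type) [Fintype ι] [DecidableEq ι] :
    (fun z : Finset ι → ℝ => fun v : ι => z {v}) ''
        (convexHull ℝ (CompleteMultilinearSet ι) ∩ {z | parityForm z = 0}) =
      convexHull ℝ {x : ι → ℝ | (∀ v, x v = 0 ∨ x v = 1) ∧
        Even ((Finset.univ.filter fun v => x v = 1).card)} := by
  change nodeProj '' (convexHull ℝ (CompleteMultilinearSet ι) ∩ {z | parityFormₗ z = 0}) = _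
  rw [convexHull_inter_setOf_eq_zero_of_nonneg _ fun z hz ↦ parityForm_nonneg hz,
    LinearMap.image_convexHull, coe_parityFormₗ,
    image_nodeProj_completeMultilinearSet_inter_parityForm_eq_zero]
end
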